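/- Let {ψ_j : j ∈ ℕ²} and {φ_j : j ∈ ℕ²} be frames for H with |⟨ψ_j, φ_l⟩| ≤ γ₁(1+|j₁−l₁|)^{-s}(1+|j₂−l₂|)^{-s} for some s > 1/2. For n, m ∈ ℕ² with m₁ > n₁, m₂ > n₂, let G_n = span{φ_j : 1 ≤ j ≤ n}, Q_n the orthogonal projection onto G_n, S_m the partial frame operator of {ψ_j}, W_n = Q_n S_m |_{G_n}, and B_{m,n} = (4sγ₁²/((2s−1)² λ_min(Φ_n))) n₁ n₂ [(m₁−n₁)^{-(2s-1)} + (m₂−n₂)^{-(2s-1)}], where Φ_n is the Gram matrix of {φ_j : 1 ≤ j ≤ n}, assumed invertible. Then ‖S − W_n‖_{G_n} ≤ B_{m,n}, where S is the full frame operator of {ψ_j} and the norm is the operator norm of the restriction to G_n. -/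

import Mathlib

open scoped InnerProductSpace

def Pos2 : Type := {p : ℕ × ℕ // 1 ≤ p.1 ∧ 1 ≤ p.2}

/-!
Write `g = ∑_{l ≤ n} a_l φ_l`. As `Q_n` is the orthogonal projection onto `G_n ∋ g`, the quantity
`⟨(S - W_n) g, g⟩` is the tail `∑_{j ≰ m} ⟨g, ψ_j⟩²` of the frame series. Cauchy–Schwarz and the
decay of the cross-Gram matrix give
`|⟨g, ψ_j⟩|² ≤ γ₁² ‖a‖² ∑_{l ≤ n} (1 + |j₁ - l₁|)^{-2s} (1 + |j₂ - l₂|)^{-2s}`,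
and `‖a‖² ≤ ‖g‖² / λ` by the Gram bound. For fixed `l`, the tail indices with `j₁ > m₁`
contribute at most `(m₁ - n₁)^{1-2s} / (2s - 1)` in the first coordinate times `1 + 2 / (2s - 1)`
in the second, and symmetrically for `j₂ > m₂`; the one-dimensional sums are bounded by
telescoping `x^{1-2s}`.
-/

open Finset

noncomputable def decay (r : ℝ) (a l : ℕ) : ℝ := (1 + |(a : ℝ) - l|) ^ (-r)

lemma decay_nonneg (r : ℝ) (a l : ℕ) : 0 ≤ decay r a l := by
  unfold decay; positivity

section DecaySums

variable {r : ℝ}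

lemma mul_rpow_neg_le_rpow_sub_rpow (hr : 1 < r) {x : ℝ} (hx : 0 < x) :
    (r - 1) * (x + 1) ^ (-r) ≤ x ^ (-(r - 1)) - (x + 1) ^ (-(r - 1)) := by
  obtain ⟨c, ⟨hxc, hcx⟩, hslope⟩ := exists_hasDerivAt_eq_slope (fun u => u ^ (-(r - 1)))
    (fun u => -(r - 1) * u ^ (-(r - 1) - 1)) (lt_add_one x)
    (fun u hu =>
      (Real.continuousAt_rpow_const _ _ (Or.inl (hx.trans_le hu.1).ne')).continuousWithinAt)
    (fun u hu => Real.hasDerivAt_rpow_const (Or.inl (hx.trans hu.1).ne'))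
  have hc : 0 < c := hx.trans hxc
  have hexp : -(r - 1) - 1 = -r := by ring
  rw [hexp, add_sub_cancel_left, div_one] at hslope
  have := Real.rpow_le_rpow_of_nonpos hc hcx.le (by linarith : -r ≤ 0)
  nlinarith

lemma sum_one_add_rpow_neg_le_of_le (hr : 1 < r) {K : ℕ} (hK : 1 ≤ K) {G : Finset ℕ}
    (hG : ∀ k ∈ G, K ≤ k) :
    ∑ k ∈ G, (1 + (k : ℝ)) ^ (-r) ≤ (K : ℝ) ^ (-(r - 1)) / (r - 1) := by
  have hr' : 0 < r - 1 := by linarith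
  set b : ℕ → ℝ := fun k => (k : ℝ) ^ (-(r - 1))
  set N := G.sup id + 1
  have hsub : G ⊆ Ico K N := fun k hk =>
    mem_Ico.2 ⟨hG k hk, Nat.lt_succ_of_le (le_sup (f := id) hk)⟩
  have hterm : ∀ k ∈ Ico K N, (1 + (k : ℝ)) ^ (-r) ≤ (b k - b (k + 1)) / (r - 1) := by
    intro k hk
    have hk : (0 : ℝ) < k := by exact_mod_cast hK.trans (mem_Ico.1 hk).1
    rw [le_div_iff₀ hr', add_comm (1 : ℝ), mul_comm]
    simpa [b] using mul_rpow_neg_le_rpow_sub_rpow hr hk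
  calc ∑ k ∈ G, (1 + (k : ℝ)) ^ (-r)
      ≤ ∑ k ∈ Ico K N, (1 + (k : ℝ)) ^ (-r) :=
        sum_le_sum_of_subset_of_nonneg hsub fun _ _ _ => by positivity
    _ ≤ ∑ k ∈ Ico K N, (b k - b (k + 1)) / (r - 1) := sum_le_sum hterm
    _ ≤ b K / (r - 1) := by
        rw [← sum_div]
        gcongr
        rcases le_total K N with hKN | hNK
        · have := sum_Ico_sub (fun k => -b k) hKN
          simp only [sub_neg_eq_add, neg_add_eq_sub] at this
          rw [this]
          linarith [show 0 ≤ b N by positivity]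
        · rw [Ico_eq_empty_of_le hNK, sum_empty]
          positivity

lemma sum_one_add_rpow_neg_le (hr : 1 < r) (G : Finset ℕ) :
    ∑ k ∈ G, (1 + (k : ℝ)) ^ (-r) ≤ 1 + 1 / (r - 1) := by
  calc ∑ k ∈ G, (1 + (k : ℝ)) ^ (-r)
      ≤ ∑ k ∈ insert 0 (G.erase 0), (1 + (k : ℝ)) ^ (-r) :=
        sum_le_sum_of_subset_of_nonneg (insert_erase_subset 0 G) fun _ _ _ => by positivity
    _ = 1 + ∑ k ∈ G.erase 0, (1 + (k : ℝ)) ^ (-r) := by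
        rw [sum_insert (notMem_erase 0 G)]
        simp
    _ ≤ 1 + 1 / (r - 1) := by
        gcongr
        simpa using sum_one_add_rpow_neg_le_of_le hr le_rfl fun k hk =>
          Nat.one_le_iff_ne_zero.2 (ne_of_mem_erase hk)

lemma decay_comm (r : ℝ) (a l : ℕ) : decay r a l = decay r l a := by
  rw [decay, decay, abs_sub_comm]

lemma decay_eq_of_le (r : ℝ) {a l : ℕ} (h : l ≤ a) :
    decay r a l = (1 + ((a - l : ℕ) : ℝ)) ^ (-r) := by
  rw [decay, Nat.cast_sub h, abs_of_nonneg (sub_nonneg.2 (Nat.cast_le.2 h))]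

lemma sum_decay_eq_of_le (r : ℝ) {l : ℕ} {G : Finset ℕ} (hG : ∀ a ∈ G, l ≤ a) :
    ∑ a ∈ G, decay r a l = ∑ k ∈ G.image (· - l), (1 + (k : ℝ)) ^ (-r) := by
  rw [sum_image fun a ha b hb hab => by have := hG a ha; have := hG b hb; omega]
  exact sum_congr rfl fun a ha => decay_eq_of_le r (hG a ha)

lemma sum_decay_eq_of_ge (r : ℝ) {l : ℕ} {G : Finset ℕ} (hG : ∀ a ∈ G, a ≤ l) :
    ∑ a ∈ G, decay r a l = ∑ k ∈ G.image (l - ·), (1 + (k : ℝ)) ^ (-r) := by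
  rw [sum_image fun a ha b hb hab => by have := hG a ha; have := hG b hb; omega]
  exact sum_congr rfl fun a ha => (decay_comm r a l).trans (decay_eq_of_le r (hG a ha))

lemma sum_decay_le (hr : 1 < r) (l : ℕ) (G : Finset ℕ) :
    ∑ a ∈ G, decay r a l ≤ 1 + 2 / (r - 1) := by
  rw [← sum_filter_add_sum_filter_not G (· ≤ l)]
  have hle : ∑ a ∈ G.filter (· ≤ l), decay r a l ≤ 1 + 1 / (r - 1) := by
    rw [sum_decay_eq_of_ge r fun a ha => (mem_filter.1 ha).2]
    exact sum_one_add_rpow_neg_le hr _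
  have hgt : ∑ a ∈ G.filter (¬ · ≤ l), decay r a l ≤ 1 / (r - 1) := by
    rw [sum_decay_eq_of_le r fun a ha => (not_le.1 (mem_filter.1 ha).2).le]
    simpa using sum_one_add_rpow_neg_le_of_le hr le_rfl fun k hk => by
      obtain ⟨a, ha, rfl⟩ := mem_image.1 hk
      have := (mem_filter.1 ha).2
      omega
  linarith [show 2 / (r - 1) = 1 / (r - 1) + 1 / (r - 1) by ring]

lemma sum_decay_le_of_lt (hr : 1 < r) {l N M : ℕ} (hl : l ≤ N) (hNM : N < M) {G : Finset ℕ}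
    (hG : ∀ a ∈ G, M < a) :
    ∑ a ∈ G, decay r a l ≤ ((M : ℝ) - N) ^ (-(r - 1)) / (r - 1) := by
  rw [sum_decay_eq_of_le r fun a ha => by have := hG a ha; omega, ← Nat.cast_sub hNM.le]
  refine sum_one_add_rpow_neg_le_of_le hr (by omega) fun k hk => ?_
  obtain ⟨a, ha, rfl⟩ := mem_image.1 hk
  have := hG a ha
  omega

end DecaySums

lemma sum_mul_le_sum_image_mul_sum_image {α β : Type*} [DecidableEq α] [DecidableEq β]
    {u : α → ℝ} {v : β → ℝ} (hu : ∀ a, 0 ≤ u a) (hv : ∀ b, 0 ≤ v b) (F : Finset (α × β)) :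
    ∑ p ∈ F, u p.1 * v p.2 ≤ (∑ a ∈ F.image Prod.fst, u a) * ∑ b ∈ F.image Prod.snd, v b := by
  rw [sum_mul_sum, ← sum_product']
  exact sum_le_sum_of_subset_of_nonneg
    (fun p hp => mem_product.2 ⟨mem_image_of_mem _ hp, mem_image_of_mem _ hp⟩)
    fun p _ _ => mul_nonneg (hu _) (hv _)

section TwoDimensional

variable {r : ℝ} {n m : ℕ × ℕ}

lemma sum_decay_mul_decay_le (hr : 1 < r) (hm1 : n.1 < m.1) (hm2 : n.2 < m.2) {l : ℕ × ℕ}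
    (hl : l ≤ n) {F : Finset (ℕ × ℕ)} (hF : ∀ p ∈ F, m.1 < p.1 ∨ m.2 < p.2) :
    ∑ p ∈ F, decay r p.1 l.1 * decay r p.2 l.2 ≤ (1 + 2 / (r - 1)) / (r - 1) *
      (((m.1 : ℝ) - n.1) ^ (-(r - 1)) + ((m.2 : ℝ) - n.2) ^ (-(r - 1))) := by
  have hprod : ∀ F' : Finset (ℕ × ℕ), ∑ p ∈ F', decay r p.1 l.1 * decay r p.2 l.2 ≤
      (∑ a ∈ F'.image Prod.fst, decay r a l.1) * ∑ b ∈ F'.image Prod.snd, decay r b l.2 :=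
    sum_mul_le_sum_image_mul_sum_image (decay_nonneg r · _) (decay_nonneg r · _)
  have hnn : ∀ (G : Finset ℕ) (k : ℕ), 0 ≤ ∑ a ∈ G, decay r a k :=
    fun _ _ => sum_nonneg fun _ _ => decay_nonneg _ _ _
  have hfar1 : ∑ p ∈ F.filter (m.1 < ·.1), decay r p.1 l.1 * decay r p.2 l.2 ≤
      ((m.1 : ℝ) - n.1) ^ (-(r - 1)) / (r - 1) * (1 + 2 / (r - 1)) := by
    refine (hprod _).trans (mul_le_mul ?_ (sum_decay_le hr _ _) (hnn _ _) ?_)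
    · refine sum_decay_le_of_lt hr hl.1 hm1 fun a ha => ?_
      obtain ⟨p, hp, rfl⟩ := mem_image.1 ha
      exact (mem_filter.1 hp).2
    · have : (n.1 : ℝ) < m.1 := by exact_mod_cast hm1
      exact div_nonneg (Real.rpow_nonneg (by linarith) _) (by linarith)
  have hfar2 : ∑ p ∈ F.filter (¬ m.1 < ·.1), decay r p.1 l.1 * decay r p.2 l.2 ≤
      (1 + 2 / (r - 1)) * (((m.2 : ℝ) - n.2) ^ (-(r - 1)) / (r - 1)) := by
    refine (hprod _).trans (mul_le_mul (sum_decay_le hr _ _) ?_ (hnn _ _) (by positivity))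
    refine sum_decay_le_of_lt hr hl.2 hm2 fun b hb => ?_
    obtain ⟨p, hp, rfl⟩ := mem_image.1 hb
    exact (hF p (mem_filter.1 hp).1).resolve_left (mem_filter.1 hp).2
  rw [← sum_filter_add_sum_filter_not F (m.1 < ·.1)]
  refine (add_le_add hfar1 hfar2).trans_eq ?_
  ring

lemma sum_sum_decay_mul_decay_le (hr : 1 < r) (hm1 : n.1 < m.1) (hm2 : n.2 < m.2)
    {F : Finset (ℕ × ℕ)} (hF : ∀ p ∈ F, m.1 < p.1 ∨ m.2 < p.2) :
    ∑ p ∈ F, ∑ l ∈ Icc ((1, 1) : ℕ × ℕ) n, decay r p.1 l.1 * decay r p.2 l.2 ≤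
      n.1 * n.2 * ((1 + 2 / (r - 1)) / (r - 1) *
        (((m.1 : ℝ) - n.1) ^ (-(r - 1)) + ((m.2 : ℝ) - n.2) ^ (-(r - 1)))) := by
  rw [sum_comm]
  refine (sum_le_sum fun l hl => sum_decay_mul_decay_le hr hm1 hm2 (mem_Icc.1 hl).2 hF).trans_eq ?_
  rw [sum_const, nsmul_eq_mul, card_Icc_prod, Nat.card_Icc, Nat.card_Icc]
  push_cast
  ring

end TwoDimensional

lemma sq_le_decay_mul_decay {x γ s : ℝ} {j l : ℕ × ℕ} (hx : 0 ≤ x)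
    (h : x ≤ γ * (1 + |(j.1 : ℝ) - l.1|) ^ (-s) * (1 + |(j.2 : ℝ) - l.2|) ^ (-s)) :
    x ^ 2 ≤ γ ^ 2 * (decay (2 * s) j.1 l.1 * decay (2 * s) j.2 l.2) := by
  have hsq : ∀ y : ℝ, 0 ≤ y → (y ^ (-s)) ^ 2 = y ^ (-(2 * s)) := fun y hy => by
    rw [← Real.rpow_natCast, ← Real.rpow_mul hy]
    ring_nf
  calc x ^ 2 ≤ (γ * (1 + |(j.1 : ℝ) - l.1|) ^ (-s) * (1 + |(j.2 : ℝ) - l.2|) ^ (-s)) ^ 2 := by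
        gcongr
    _ = _ := by
        rw [mul_pow, mul_pow, hsq _ (by positivity), hsq _ (by positivity), decay, decay]
        ring

lemma exists_eq_sum_smul_of_mem_span_image {ι R M : Type*} [Semiring R] [AddCommMonoid M]
    [Module R M] {v : ι → M} {s : Finset ι} {x : M} (hx : x ∈ Submodule.span R (v '' s)) :
    ∃ a : ι → R, x = ∑ i ∈ s, a i • v i := by
  classical
  obtain ⟨c, rfl⟩ := (Submodule.mem_span_image_finset_iff_exists_fun R).1 hx
  refine ⟨fun i => if h : i ∈ s then c ⟨i, h⟩ else 0, ?_⟩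
  rw [← sum_coe_sort s]
  simp

lemma norm_le_of_hasSum_of_sum_norm_le {ι E : Type*} [SeminormedAddCommGroup E] {f : ι → E}
    {a : E} {C : ℝ} (hf : HasSum f a) (h : ∀ F : Finset ι, ∑ i ∈ F, ‖f i‖ ≤ C) : ‖a‖ ≤ C :=
  le_of_tendsto' hf.norm fun F => (norm_sum_le _ _).trans (h F)

section InnerProductSpace

variable {𝕜 E : Type*} [RCLike 𝕜] [NormedAddCommGroup E] [InnerProductSpace 𝕜 E]

lemma norm_inner_sum_smul_sq_le {ι : Type*} (s : Finset ι) (a : ι → 𝕜) (φ : ι → E) (v : E) :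
    ‖⟪∑ i ∈ s, a i • φ i, v⟫_𝕜‖ ^ 2 ≤ (∑ i ∈ s, ‖a i‖ ^ 2) * ∑ i ∈ s, ‖⟪φ i, v⟫_𝕜‖ ^ 2 := by
  calc ‖⟪∑ i ∈ s, a i • φ i, v⟫_𝕜‖ ^ 2 ≤ (∑ i ∈ s, ‖a i‖ * ‖⟪φ i, v⟫_𝕜‖) ^ 2 := by
        gcongr
        rw [sum_inner]
        refine (norm_sum_le _ _).trans_eq ?_
        simp [inner_smul_left]
    _ ≤ _ := sum_mul_sq_le_sq_mul_sq _ _ _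

lemma hasSum_inner_sub_sum_smul {ι : Type*} (ψ : ι → E) {g Sg : E}
    (hS : HasSum (fun i => ⟪g, ψ i⟫_𝕜 • ψ i) Sg) (s : Finset ι) :
    HasSum (fun i : {i // i ∉ s} => ⟪g, ψ i⟫_𝕜 * ⟪g, ψ i⟫_𝕜)
      ⟪g, Sg - ∑ i ∈ s, ⟪g, ψ i⟫_𝕜 • ψ i⟫_𝕜 := by
  have h := hS.mapL (innerSL 𝕜 g)
  simp only [innerSL_apply_apply, inner_smul_right] at h
  refine (s.hasSum_compl_iff (f := fun i => ⟪g, ψ i⟫_𝕜 * ⟪g, ψ i⟫_𝕜)).2 ?_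
  simpa [inner_sub_right, inner_sum, inner_smul_right] using h

end InnerProductSpace

lemma one_add_two_div_div_le {s : ℝ} (hs : 1 / 2 < s) :
    (1 + 2 / (2 * s - 1)) / (2 * s - 1) ≤ 4 * s / (2 * s - 1) ^ 2 := by
  have ht : 0 < 2 * s - 1 := by linarith
  rw [div_le_div_iff₀ ht (by positivity)]
  field_simp
  linarith

section Frames

variable {H : Type*} [NormedAddCommGroup H] [InnerProductSpace ℂ H]

lemma norm_inner_sub_sum_le_of_sum_le {ψ : ℕ × ℕ → H} {g Sg : H}
    (hS : HasSum (fun p : Pos2 => ⟪g, ψ p.1⟫_ℂ • ψ p.1) Sg) (m : ℕ × ℕ) {C : ℝ}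
    (hC : ∀ F : Finset (ℕ × ℕ), (∀ j ∈ F, 1 ≤ j.1 ∧ 1 ≤ j.2 ∧ (m.1 < j.1 ∨ m.2 < j.2)) →
      ∑ j ∈ F, ‖⟪g, ψ j⟫_ℂ‖ ^ 2 ≤ C) :
    ‖⟪g, Sg - ∑ j ∈ Icc ((1, 1) : ℕ × ℕ) m, ⟪g, ψ j⟫_ℂ • ψ j⟫_ℂ‖ ≤ C := by
  set box : Finset Pos2 := (Icc ((1, 1) : ℕ × ℕ) m).subtype fun p => 1 ≤ p.1 ∧ 1 ≤ p.2
  have hbox : ∑ p ∈ box, ⟪g, ψ p.1⟫_ℂ • ψ p.1 = ∑ j ∈ Icc ((1, 1) : ℕ × ℕ) m, ⟪g, ψ j⟫_ℂ • ψ j :=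
    (sum_subtype_eq_sum_filter (f := fun j => ⟪g, ψ j⟫_ℂ • ψ j)).trans
      (by rw [sum_filter]; exact sum_congr rfl fun j hj => if_pos (mem_Icc.1 hj).1)
  have htail := hasSum_inner_sub_sum_smul (fun p : Pos2 => ψ p.1) hS box
  rw [hbox] at htail
  refine norm_le_of_hasSum_of_sum_norm_le htail fun F => ?_
  have hinj : Set.InjOn (fun q : {p : Pos2 // p ∉ box} => q.1.1) F :=
    fun q _ q' _ h => Subtype.ext (Subtype.ext h)
  have hF := hC (F.image fun q => q.1.1) <| by
    simp only [mem_image]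
    rintro _ ⟨⟨⟨j, hj1, hj2⟩, hj⟩, -, rfl⟩
    refine ⟨hj1, hj2, ?_⟩
    by_contra! h
    exact hj (mem_subtype.2 (mem_Icc.2 ⟨⟨hj1, hj2⟩, h⟩))
  rw [sum_image hinj] at hF
  simpa only [norm_mul, sq] using hF

lemma sum_norm_inner_sq_le {ψ φ : ℕ × ℕ → H} {γ₁ s : ℝ} (hs : 1 / 2 < s)
    (hcross : ∀ j l : ℕ × ℕ, 1 ≤ j.1 → 1 ≤ j.2 → 1 ≤ l.1 → 1 ≤ l.2 →
      ‖⟪ψ j, φ l⟫_ℂ‖ ≤ γ₁ * (1 + |(j.1 : ℝ) - l.1|) ^ (-s) * (1 + |(j.2 : ℝ) - l.2|) ^ (-s))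
    {n m : ℕ × ℕ} (hm1 : n.1 < m.1) (hm2 : n.2 < m.2) {g : H} {a : ℕ × ℕ → ℂ}
    (hg : g = ∑ l ∈ Icc ((1, 1) : ℕ × ℕ) n, a l • φ l) {K : ℝ}
    (ha : ∑ l ∈ Icc ((1, 1) : ℕ × ℕ) n, ‖a l‖ ^ 2 ≤ K) {F : Finset (ℕ × ℕ)}
    (hF : ∀ j ∈ F, 1 ≤ j.1 ∧ 1 ≤ j.2 ∧ (m.1 < j.1 ∨ m.2 < j.2)) :
    ∑ j ∈ F, ‖⟪g, ψ j⟫_ℂ‖ ^ 2 ≤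
      4 * s * γ₁ ^ 2 / (2 * s - 1) ^ 2 * n.1 * n.2 *
        (((m.1 : ℝ) - n.1) ^ (-(2 * s - 1)) + ((m.2 : ℝ) - n.2) ^ (-(2 * s - 1))) * K := by
  set L := Icc ((1, 1) : ℕ × ℕ) n
  have hpair : ∀ j ∈ F, ∀ l ∈ L,
      ‖⟪φ l, ψ j⟫_ℂ‖ ^ 2 ≤ γ₁ ^ 2 * (decay (2 * s) j.1 l.1 * decay (2 * s) j.2 l.2) := by
    intro j hj l hl
    obtain ⟨hj1, hj2, -⟩ := hF j hj
    obtain ⟨hl1, hl2⟩ := (mem_Icc.1 hl).1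
    refine sq_le_decay_mul_decay (norm_nonneg _) ?_
    rw [norm_inner_symm]
    exact hcross j l hj1 hj2 hl1 hl2
  set E := ((m.1 : ℝ) - n.1) ^ (-(2 * s - 1)) + ((m.2 : ℝ) - n.2) ^ (-(2 * s - 1))
  have hE : 0 ≤ E := add_nonneg (Real.rpow_nonneg (sub_nonneg.2 (by exact_mod_cast hm1.le)) _)
    (Real.rpow_nonneg (sub_nonneg.2 (by exact_mod_cast hm2.le)) _)
  have hK : 0 ≤ K := (sum_nonneg fun _ _ => by positivity).trans ha
  have hdecay := sum_sum_decay_mul_decay_le (r := 2 * s) (by linarith) hm1 hm2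
    fun j hj => (hF j hj).2.2
  subst hg
  calc ∑ j ∈ F, ‖⟪∑ l ∈ L, a l • φ l, ψ j⟫_ℂ‖ ^ 2
      ≤ ∑ j ∈ F, (∑ l ∈ L, ‖a l‖ ^ 2) * ∑ l ∈ L, ‖⟪φ l, ψ j⟫_ℂ‖ ^ 2 :=
        sum_le_sum fun j _ => norm_inner_sum_smul_sq_le _ _ _ _
    _ ≤ ∑ j ∈ F, K * ∑ l ∈ L, γ₁ ^ 2 * (decay (2 * s) j.1 l.1 * decay (2 * s) j.2 l.2) := by
        gcongr with j hj l hl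
        exact hpair j hj l hl
    _ = K * γ₁ ^ 2 * ∑ j ∈ F, ∑ l ∈ L, decay (2 * s) j.1 l.1 * decay (2 * s) j.2 l.2 := by
        simp only [← mul_sum, mul_assoc]
    _ ≤ K * γ₁ ^ 2 * (n.1 * n.2 * (4 * s / (2 * s - 1) ^ 2 * E)) := by
        refine mul_le_mul_of_nonneg_left (hdecay.trans ?_) (by positivity)
        gcongr _ * (?_ * _)
        exact one_add_two_div_div_le hs
    _ = _ := by ring

end Frames

theorem stmt15_general {H : Type*} [NormedAddCommGroup H] [InnerProductSpace ℂ H]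
    (s γ₁ lam : ℝ) (hs : 1/2 < s) (hlam : 0 < lam)
    (ψ φ : ℕ × ℕ → H)
    (hcross : ∀ j l : ℕ × ℕ, 1 ≤ j.1 → 1 ≤ j.2 → 1 ≤ l.1 → 1 ≤ l.2 →
      ‖⟪ψ j, φ l⟫_ℂ‖ ≤ γ₁ * (1 + |(j.1 : ℝ) - l.1|) ^ (-s) * (1 + |(j.2 : ℝ) - l.2|) ^ (-s))
    (n m : ℕ × ℕ) (hm1 : n.1 < m.1) (hm2 : n.2 < m.2)
    -- lam is (a lower bound for) the smallest eigenvalue of the Gram matrix Φ_n: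
    (hgram : ∀ a : ℕ × ℕ → ℂ,
      lam * ∑ l ∈ Finset.Icc ((1, 1) : ℕ × ℕ) n, ‖a l‖^2 ≤
        ‖∑ l ∈ Finset.Icc ((1, 1) : ℕ × ℕ) n, a l • φ l‖^2)
    -- the full frame operator S of {ψ_j}:
    (S : H →L[ℂ] H)
    (hS : ∀ f : H, HasSum (fun p : Pos2 => ⟪f, ψ p.1⟫_ℂ • ψ p.1) (S f))
    -- the orthogonal projection Q_n onto G_n = span{φ_j : 1 ≤ j ≤ n}:
    (Q : H →L[ℂ] H)
    (hQorth : ∀ x y : H,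
      y ∈ Submodule.span ℂ (φ '' Set.Icc ((1, 1) : ℕ × ℕ) n) → ⟪x - Q x, y⟫_ℂ = 0) :
    -- ‖S − W_n‖_{G_n} ≤ B_{m,n}, via the quadratic-form expression of the norm:
    ∀ g ∈ Submodule.span ℂ (φ '' Set.Icc ((1, 1) : ℕ × ℕ) n),
      ‖⟪S g - Q (∑ j ∈ Finset.Icc ((1, 1) : ℕ × ℕ) m, ⟪g, ψ j⟫_ℂ • ψ j), g⟫_ℂ‖
        ≤ (4 * s * γ₁^2 / ((2 * s - 1)^2 * lam)) * (n.1 : ℝ) * (n.2 : ℝ) *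
            (((m.1 : ℝ) - n.1) ^ (-(2 * s - 1)) + ((m.2 : ℝ) - n.2) ^ (-(2 * s - 1))) *
          ‖g‖^2 := by
  intro g hg
  obtain ⟨a, hga⟩ := exists_eq_sum_smul_of_mem_span_image (s := Icc ((1, 1) : ℕ × ℕ) n)
    (by rwa [coe_Icc])
  have hcoef : ∑ l ∈ Icc ((1, 1) : ℕ × ℕ) n, ‖a l‖ ^ 2 ≤ ‖g‖ ^ 2 / lam :=
    (le_div_iff₀ hlam).2 (by rw [mul_comm, hga]; exact hgram a)
  set Smg := ∑ j ∈ Icc ((1, 1) : ℕ × ℕ) m, ⟪g, ψ j⟫_ℂ • ψ j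
  have hproj : ⟪Smg - Q Smg, g⟫_ℂ = 0 := hQorth Smg g hg
  rw [← sub_add_sub_cancel _ Smg, inner_add_left, hproj, add_zero, norm_inner_symm]
  refine norm_inner_sub_sum_le_of_sum_le (hS g) m fun F hF => ?_
  refine (sum_norm_inner_sq_le hs hcross hm1 hm2 hga hcoef hF).trans_eq ?_
  field_simp

theorem stmt15 {H : Type*} [NormedAddCommGroup H] [InnerProductSpace ℂ H]
    (s A B A' B' γ₁ lam : ℝ) (hs : 1/2 < s)
    (hA : 0 < A) (hB : 0 < B) (hA' : 0 < A') (hB' : 0 < B') (hγ₁ : 0 < γ₁) (hlam : 0 < lam)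
    (ψ φ : ℕ × ℕ → H)
    (hframeψ : ∀ g : H,
      A * ‖g‖^2 ≤ ∑' p : Pos2, ‖⟪g, ψ p.1⟫_ℂ‖^2 ∧
      ∑' p : Pos2, ‖⟪g, ψ p.1⟫_ℂ‖^2 ≤ B * ‖g‖^2)
    (hframeφ : ∀ g : H,
      A' * ‖g‖^2 ≤ ∑' p : Pos2, ‖⟪g, φ p.1⟫_ℂ‖^2 ∧
      ∑' p : Pos2, ‖⟪g, φ p.1⟫_ℂ‖^2 ≤ B' * ‖g‖^2)
    (hcross : ∀ j l : ℕ × ℕ, 1 ≤ j.1 → 1 ≤ j.2 → 1 ≤ l.1 → 1 ≤ l.2 →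
      ‖⟪ψ j, φ l⟫_ℂ‖ ≤ γ₁ * (1 + |(j.1 : ℝ) - l.1|) ^ (-s) * (1 + |(j.2 : ℝ) - l.2|) ^ (-s))
    (n m : ℕ × ℕ) (hn1 : 1 ≤ n.1) (hn2 : 1 ≤ n.2) (hm1 : n.1 < m.1) (hm2 : n.2 < m.2)
    -- lam is (a lower bound for) the smallest eigenvalue of the Gram matrix Φ_n:
    (hgram : ∀ a : ℕ × ℕ → ℂ,
      lam * ∑ l ∈ Finset.Icc ((1, 1) : ℕ × ℕ) n, ‖a l‖^2 ≤
        ‖∑ l ∈ Finset.Icc ((1, 1) : ℕ × ℕ) n, a l • φ l‖^2)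
    -- the full frame operator S of {ψ_j}:
    (S : H →L[ℂ] H)
    (hS : ∀ f : H, HasSum (fun p : Pos2 => ⟪f, ψ p.1⟫_ℂ • ψ p.1) (S f))
    -- the orthogonal projection Q_n onto G_n = span{φ_j : 1 ≤ j ≤ n}:
    (Q : H →L[ℂ] H)
    (hQmem : ∀ x : H, Q x ∈ Submodule.span ℂ (φ '' Set.Icc ((1, 1) : ℕ × ℕ) n))
    (hQorth : ∀ x y : H,
      y ∈ Submodule.span ℂ (φ '' Set.Icc ((1, 1) : ℕ × ℕ) n) → ⟪x - Q x, y⟫_ℂ = 0) :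
    -- ‖S − W_n‖_{G_n} ≤ B_{m,n}, via the quadratic-form expression of the norm:
    ∀ g ∈ Submodule.span ℂ (φ '' Set.Icc ((1, 1) : ℕ × ℕ) n),
      ‖⟪S g - Q (∑ j ∈ Finset.Icc ((1, 1) : ℕ × ℕ) m, ⟪g, ψ j⟫_ℂ • ψ j), g⟫_ℂ‖
        ≤ (4 * s * γ₁^2 / ((2 * s - 1)^2 * lam)) * (n.1 : ℝ) * (n.2 : ℝ) *
            (((m.1 : ℝ) - n.1) ^ (-(2 * s - 1)) + ((m.2 : ℝ) - n.2) ^ (-(2 * s - 1))) *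
          ‖g‖^2 :=
  stmt15_general s γ₁ lam hs hlam ψ φ hcross n m hm1 hm2 hgram S hS Q hQorth
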